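/- Bound on the last position: let μ₀ ∈ P(ℤ), ε > 0, and R > R_{μ₀}(ε) where R_{μ₀}(ε) = min{R ∈ ℕ : μ₀(⟦−R+1,R−1⟧) > 1−ε}. If w is a nearest-neighbour trajectory of length n starting at 0 whose empirical measure ℓ(w) satisfies ‖ℓ(w) − μ₀‖ < 2^{−R} ε in the Kantorovich–Rubinstein norm on P(Z̄), then |w_n| ≤ R + 2εn. -/

import Mathlib

open MeasureTheory

/-- The two-point compactification `Z̄ = ℤ ∪ {−∞, +∞}` of `ℤ`:
`Sum.inl n` is the integer `n`, `Sum.inr false` is `−∞`, `Sum.inr true` is `+∞`. -/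
abbrev Zbar : Type := ℤ ⊕ Bool

/-- The map `φ : Z̄ → [-1,1]`, `φ(k) = sign(k)(1 − 2^{−|k|})`, `φ(±∞) = ±1`,
inducing the metric `d(h,k) = |φ(h) − φ(k)|` on `Z̄`. -/
noncomputable def phi : Zbar → ℝ
  | Sum.inr false => -1
  | Sum.inr true => 1
  | Sum.inl n => if 0 ≤ n then 1 - (2 : ℝ) ^ (-n) else -1 + (2 : ℝ) ^ n

/-- Kantorovich–Rubinstein distance between the empirical measure
`ℓ(w) = (1/n) ∑_{j=1}^n δ_{w_j}` of a trajectory and a probability measure `μ₀` on `ℤ`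
(both viewed in `P(Z̄)`): the supremum over functions `f : Z̄ → ℝ` that are `1`-Lipschitz
for the metric `d(h,k) = |φ h − φ k|` and bounded by `1` of `∫ f dℓ(w) − ∫ f dμ₀`. -/
noncomputable def krDistEmp (n : ℕ) (w : ℕ → ℤ) (μ₀ : Measure ℤ) : ℝ :=
  sSup {r : ℝ | ∃ f : Zbar → ℝ,
    (∀ a b : Zbar, |f a - f b| ≤ |phi a - phi b|) ∧ (∀ a, |f a| ≤ 1) ∧
    r = (1 / (n : ℝ)) * ∑ j ∈ Finset.Icc 1 n, f (Sum.inl (w j))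
          - ∫ z, f (Sum.inl z) ∂μ₀}

/-- `R_{μ₀}(ε) = min {R ∈ ℕ : μ₀(⟦−R+1, R−1⟧) > 1 − ε}`. -/
noncomputable def Rmu (μ₀ : Measure ℤ) (ε : ℝ) : ℕ :=
  sInf {R : ℕ | ENNReal.ofReal (1 - ε) < μ₀ {z : ℤ | -(R : ℤ) + 1 ≤ z ∧ z ≤ (R : ℤ) - 1}}

/-!
Test `ℓ(w) − μ₀` against `f = 2^{-R} · 1_{|·| ≥ R}` on `Z̄`, which is admissible because
`|φ|` jumps by `2^{-R}` between levels `R - 1` and `R`. Since `μ₀` gives the tail `{|z| ≥ R}`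
mass `< ε`, the walk spends fewer than `2εn` steps there. A nearest-neighbour path ending at
`|w_n| > R` spends at least its last `|w_n| − R` steps in the tail.
-/

open Finset

theorem abs_phi_inl (z : ℤ) : |phi (Sum.inl z)| = 1 - (2 : ℝ) ^ (-|z|) := by
  have h2 : (0 : ℝ) < 2 ^ (-|z|) := zpow_pos two_pos _
  have hle : (2 : ℝ) ^ (-|z|) ≤ 1 := zpow_le_one_of_nonpos₀ one_le_two (by simp)
  rcases le_or_gt 0 z with hz | hz
  · have hz' : (2 : ℝ) ^ (-z) = 2 ^ (-|z|) := by rw [abs_of_nonneg hz]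
    rw [phi, if_pos hz, hz', abs_of_nonneg (by linarith)]
  · have hz' : (2 : ℝ) ^ z = 2 ^ (-|z|) := by rw [abs_of_neg hz, neg_neg]
    rw [phi, if_neg hz.not_ge, hz', abs_of_nonpos (by linarith)]
    ring

theorem abs_phi_notMem_Ioo (R : ℕ) (a : Zbar) :
    |phi a| ∉ Set.Ioo (1 - 2 * (2 : ℝ) ^ (-(R : ℤ))) (1 - (2 : ℝ) ^ (-(R : ℤ))) := by
  rintro ⟨hlo, hhi⟩
  rcases a with z | (_ | _)
  · rw [abs_phi_inl] at hlo hhi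
    have h2R : 2 * (2 : ℝ) ^ (-(R : ℤ)) = 2 ^ (-(R : ℤ) + 1) := by
      rw [zpow_add_one₀ two_ne_zero, mul_comm]
    rw [h2R] at hlo
    have h1 : -(R : ℤ) < -|z| :=
      (zpow_lt_zpow_iff_right₀ one_lt_two).1 (by linarith : (2 : ℝ) ^ (-(R : ℤ)) < 2 ^ (-|z|))
    have h2 : -|z| < -(R : ℤ) + 1 :=
      (zpow_lt_zpow_iff_right₀ one_lt_two).1
        (by linarith : (2 : ℝ) ^ (-|z|) < 2 ^ (-(R : ℤ) + 1))
    omega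
  all_goals
    simp only [phi, abs_neg, abs_one] at hhi
    linarith [zpow_pos (two_pos : (0 : ℝ) < 2) (-(R : ℤ))]

theorem le_abs_phi_inl_iff {R : ℕ} {z : ℤ} :
    1 - (2 : ℝ) ^ (-(R : ℤ)) ≤ |phi (Sum.inl z)| ↔ (R : ℤ) ≤ |z| := by
  rw [abs_phi_inl, sub_le_sub_iff_left, zpow_le_zpow_iff_right₀ one_lt_two, neg_le_neg_iff]

theorem abs_indicator_sub_le_of_gap {X : Type*} (g : X → ℝ) {t δ : ℝ} (hδ : 0 ≤ δ)
    (hgap : ∀ x, g x ∉ Set.Ioo (t - δ) t) (a b : X) :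
    |{x | t ≤ g x}.indicator (fun _ => δ) a - {x | t ≤ g x}.indicator (fun _ => δ) b|
      ≤ |g a - g b| := by
  have below : ∀ x, ¬ t ≤ g x → g x ≤ t - δ := fun x hx => by
    by_contra h
    exact hgap x ⟨not_le.1 h, not_le.1 hx⟩
  by_cases ha : t ≤ g a <;> by_cases hb : t ≤ g b <;>
    simp only [Set.indicator_apply, Set.mem_ofPred_eq, ha, hb, if_true, if_false, sub_self,
      abs_zero, abs_nonneg]
  · rw [sub_zero, abs_of_nonneg hδ]
    exact (by linarith [below b hb] : δ ≤ g a - g b).trans (le_abs_self _)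
  · rw [zero_sub, abs_neg, abs_of_nonneg hδ, abs_sub_comm]
    exact (by linarith [below a ha] : δ ≤ g b - g a).trans (le_abs_self _)

noncomputable def tailTest (R : ℕ) : Zbar → ℝ :=
  {a | 1 - (2 : ℝ) ^ (-(R : ℤ)) ≤ |phi a|}.indicator fun _ => (2 : ℝ) ^ (-(R : ℤ))

theorem tailTest_lipschitz (R : ℕ) (a b : Zbar) :
    |tailTest R a - tailTest R b| ≤ |phi a - phi b| := by
  refine (abs_indicator_sub_le_of_gap (fun a => |phi a|) (zpow_pos two_pos _).le
    (fun a => ?_) a b).trans (abs_abs_sub_abs_le_abs_sub _ _)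
  simpa only [sub_sub, ← two_mul] using abs_phi_notMem_Ioo R a

theorem abs_tailTest_le_one (R : ℕ) (a : Zbar) : |tailTest R a| ≤ 1 := by
  have hpos : (0 : ℝ) < 2 ^ (-(R : ℤ)) := zpow_pos two_pos _
  have hle : (2 : ℝ) ^ (-(R : ℤ)) ≤ 1 := zpow_le_one_of_nonpos₀ one_le_two (by simp)
  unfold tailTest
  rw [Set.indicator_apply]
  split_ifs
  · rwa [abs_of_pos hpos]
  · simp

theorem tailTest_inl (R : ℕ) (z : ℤ) :
    tailTest R (Sum.inl z) =
      {z : ℤ | (R : ℤ) ≤ |z|}.indicator (fun _ => (2 : ℝ) ^ (-(R : ℤ))) z := by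
  simp only [tailTest, Set.indicator_apply, Set.mem_ofPred_eq, le_abs_phi_inl_iff]

theorem sub_integral_le_krDistEmp (n : ℕ) (w : ℕ → ℤ) (μ₀ : Measure ℤ)
    [IsFiniteMeasure μ₀] (f : Zbar → ℝ) (hlip : ∀ a b, |f a - f b| ≤ |phi a - phi b|)
    (hbdd : ∀ a, |f a| ≤ 1) :
    (1 / (n : ℝ)) * ∑ j ∈ Icc 1 n, f (Sum.inl (w j)) - ∫ z, f (Sum.inl z) ∂μ₀
      ≤ krDistEmp n w μ₀ := by
  refine le_csSup ⟨1 + μ₀.real Set.univ, ?_⟩ ⟨f, hlip, hbdd, rfl⟩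
  rintro r ⟨g, -, hg, rfl⟩
  have hsum : (1 / (n : ℝ)) * ∑ j ∈ Icc 1 n, g (Sum.inl (w j)) ≤ 1 := by
    calc (1 / (n : ℝ)) * ∑ j ∈ Icc 1 n, g (Sum.inl (w j))
        ≤ (1 / (n : ℝ)) * ∑ j ∈ Icc 1 n, 1 := by
          gcongr with j
          exact (abs_le.1 (hg _)).2
      _ ≤ 1 := by
          rcases n.eq_zero_or_pos with rfl | hn
          · simp
          · simp [hn.ne']
  have hint := norm_integral_le_of_norm_le_const (μ := μ₀) (f := fun z => g (Sum.inl z))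
    (C := 1) (.of_forall fun z => hg _)
  rw [Real.norm_eq_abs, one_mul] at hint
  linarith [neg_abs_le (∫ z, g (Sum.inl z) ∂μ₀)]

theorem lt_measure_Icc_of_Rmu_lt (μ₀ : Measure ℤ) [IsProbabilityMeasure μ₀] {ε : ℝ}
    (hε : 0 < ε) {R : ℕ} (hR : Rmu μ₀ ε < R) :
    ENNReal.ofReal (1 - ε) < μ₀ (Set.Icc (-(R : ℤ) + 1) ((R : ℤ) - 1)) := by
  set S : ℕ → Set ℤ := fun k => Set.Icc (-(k : ℤ) + 1) ((k : ℤ) - 1)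
  have hmono : Monotone S := fun k l hkl => Set.Icc_subset_Icc (by omega) (by omega)
  have hunion : ⋃ k, S k = Set.univ :=
    Set.eq_univ_of_forall fun z =>
      Set.mem_iUnion.2 ⟨z.natAbs + 1, by simp only [S, Set.mem_Icc]; omega⟩
  have hlim := tendsto_measure_iUnion_atTop (μ := μ₀) hmono
  rw [hunion, measure_univ] at hlim
  have hlt : ENNReal.ofReal (1 - ε) < 1 := by
    rw [ENNReal.ofReal_lt_one]; linarith
  obtain ⟨k, hk⟩ := (hlim.eventually (lt_mem_nhds hlt)).exists
  have hRmu : Rmu μ₀ ε ∈ {R : ℕ | ENNReal.ofReal (1 - ε) < μ₀ (S R)} :=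
    Nat.sInf_mem ⟨k, hk⟩
  exact hRmu.trans_le (measure_mono (hmono hR.le))

theorem measureReal_tail_lt (μ₀ : Measure ℤ) [IsProbabilityMeasure μ₀] {ε : ℝ}
    (hε : 0 < ε) {R : ℕ} (hR : Rmu μ₀ ε < R) :
    μ₀.real {z : ℤ | (R : ℤ) ≤ |z|} < ε := by
  have htail : {z : ℤ | (R : ℤ) ≤ |z|} = (Set.Icc (-(R : ℤ) + 1) ((R : ℤ) - 1))ᶜ := by
    ext z
    simp only [Set.mem_ofPred_eq, Set.mem_compl_iff, Set.mem_Icc, le_abs]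
    omega
  have hmid := lt_measure_Icc_of_Rmu_lt μ₀ hε hR
  have hmid' := (ENNReal.toReal_lt_toReal ENNReal.ofReal_ne_top (measure_ne_top _ _)).2 hmid
  rw [ENNReal.toReal_ofReal', ← measureReal_def] at hmid'
  rw [htail, measureReal_compl measurableSet_Icc, probReal_univ]
  linarith [le_max_left (1 - ε) 0]

theorem card_tail_visits_lt (μ₀ : Measure ℤ) [IsProbabilityMeasure μ₀] {ε : ℝ}
    (hε : 0 < ε) {R : ℕ} (hR : Rmu μ₀ ε < R) {n : ℕ} (hn : 1 ≤ n) (w : ℕ → ℤ)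
    (hclose : krDistEmp n w μ₀ < (2 : ℝ) ^ (-(R : ℤ)) * ε) :
    (#{j ∈ Icc 1 n | (R : ℤ) ≤ |w j|} : ℝ) < 2 * ε * n := by
  set δ : ℝ := 2 ^ (-(R : ℤ))
  set N : ℝ := ((#{j ∈ Icc 1 n | (R : ℤ) ≤ |w j|} : ℕ) : ℝ)
  have hδ : 0 < δ := zpow_pos two_pos _
  have hn' : (0 : ℝ) < n := by exact_mod_cast hn
  have hsum : ∑ j ∈ Icc 1 n, tailTest R (Sum.inl (w j)) = δ * N := by
    simp only [tailTest_inl, Set.indicator_apply, Set.mem_ofPred_eq]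
    rw [sum_ite, sum_const_zero, sum_const, nsmul_eq_mul, add_zero, mul_comm]
  have hint :
      ∫ z, tailTest R (Sum.inl z) ∂μ₀ = μ₀.real {z : ℤ | (R : ℤ) ≤ |z|} * δ := by
    simp only [tailTest_inl]
    rw [integral_indicator_const _ (.of_discrete), smul_eq_mul]
  have key := (sub_integral_le_krDistEmp n w μ₀ _ (tailTest_lipschitz R)
    (abs_tailTest_le_one R)).trans_lt hclose
  rw [hsum, hint] at key
  have htail := measureReal_tail_lt μ₀ hε hR
  have hfreq : N / n < 2 * ε := by
    have : δ * (N / n) < δ * (2 * ε) := by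
      rw [div_eq_inv_mul, ← one_div]; nlinarith
    exact lt_of_mul_lt_mul_left this hδ.le
  rwa [div_lt_iff₀ hn'] at hfreq

theorem abs_sub_le_of_abs_step_le {n : ℕ} {w : ℕ → ℤ}
    (hstep : ∀ j, 1 ≤ j → j < n → |w (j + 1) - w j| ≤ 1) {j k : ℕ} (hj : 1 ≤ j)
    (hjk : j ≤ k) (hkn : k ≤ n) : |w k - w j| ≤ (k : ℤ) - j := by
  induction k, hjk using Nat.le_induction with
  | base => simp
  | succ k hk ih =>
    have h1 := abs_sub_le (w (k + 1)) (w k) (w j)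
    have h2 := hstep k (hj.trans hk) hkn
    push_cast
    linarith [ih (by omega)]

theorem abs_sub_le_card_tail_visits {n : ℕ} (hn : 1 ≤ n) {w : ℕ → ℤ} (hw0 : w 1 = 0)
    (hstep : ∀ j, 1 ≤ j → j < n → |w (j + 1) - w j| ≤ 1) (R : ℕ) :
    |w n| - R ≤ #{j ∈ Icc 1 n | (R : ℤ) ≤ |w j|} := by
  rcases le_or_gt (|w n|) R with hle | hlt
  · omega
  set d := (|w n| - R).toNat
  have hd : (d : ℤ) = |w n| - R := Int.toNat_of_nonneg (by omega)
  have hwn : |w n| ≤ (n : ℤ) - 1 := by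
    simpa [hw0] using abs_sub_le_of_abs_step_le hstep le_rfl hn le_rfl
  -- the last `d` positions are within distance `d - 1` of `w n`, hence in the tail
  have hsub : Icc (n - d + 1) n ⊆ {j ∈ Icc 1 n | (R : ℤ) ≤ |w j|} := by
    intro j hj
    rw [mem_Icc] at hj
    have hj1 : 1 ≤ j := by omega
    have hdist := abs_sub_le_of_abs_step_le hstep hj1 hj.2 le_rfl
    have := abs_sub_abs_le_abs_sub (w n) (w j)
    rw [mem_filter, mem_Icc]
    refine ⟨⟨hj1, hj.2⟩, ?_⟩
    omega
  have hcard := card_le_card hsub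
  rw [Nat.card_Icc] at hcard
  omega

/-- Bound on the last position of a trajectory whose empirical measure is
`2^{-R} ε`-close to a central probability measure `μ₀ ∈ P(ℤ)`. -/
theorem bound_on_last_position
    (μ₀ : Measure ℤ) [IsProbabilityMeasure μ₀] (ε : ℝ) (hε : 0 < ε)
    (R : ℕ) (hR : Rmu μ₀ ε < R)
    (n : ℕ) (hn : 1 ≤ n) (w : ℕ → ℤ) (hw0 : w 1 = 0)
    (hstep : ∀ j, 1 ≤ j → j < n → (w (j + 1) - w j = 1 ∨ w (j + 1) - w j = -1))
    (hclose : krDistEmp n w μ₀ < (2 : ℝ) ^ (-(R : ℤ)) * ε) :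
    |(w n : ℝ)| ≤ R + 2 * ε * n := by
  have hstep' : ∀ j, 1 ≤ j → j < n → |w (j + 1) - w j| ≤ 1 := fun j hj hjn => by
    rcases hstep j hj hjn with h | h <;> simp [h]
  have hvisits : ((|w n| - R : ℤ) : ℝ) ≤ #{j ∈ Icc 1 n | (R : ℤ) ≤ |w j|} := by
    exact_mod_cast abs_sub_le_card_tail_visits hn hw0 hstep' R
  have hfew := card_tail_visits_lt μ₀ hε hR hn w hclose
  push_cast at hvisits
  linarith
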